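/- Let f be the morphism on {0,...,7} given by f(0)=01, f(1)=23, f(2)=24, f(3)=51, f(4)=06, f(5)=01, f(6)=74, f(7)=24, let W = f^ω(0) be its fixed point starting with 0, and let g be the coding g(m) = m mod 2 for m ≠ 6 and g(6) = ⋄. Then the infinite partial word g(W) over {0,1,⋄} contains no antisquare of order ≥ 3: there are no j and n ≥ 3 with, for all i < n, g(W)[j+i] ≠ g(W)[j+n+i] and g(W)[j+i] ≠ ⋄ and g(W)[j+n+i] ≠ ⋄. -/

import Mathlib

/-- The morphism f(0)=01, f(1)=23, f(2)=24, f(3)=51, f(4)=06, f(5)=01, f(6)=74, f(7)=24. -/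
def fImg : ℕ → List ℕ
  | 0 => [0, 1]
  | 1 => [2, 3]
  | 2 => [2, 4]
  | 3 => [5, 1]
  | 4 => [0, 6]
  | 5 => [0, 1]
  | 6 => [7, 4]
  | _ => [2, 4]

/-- The fixed point W = f^ω(0). -/
def W (n : ℕ) : ℕ := ((fun l => l.flatMap fImg)^[n+1] [0]).getD n 0

/-- The coding g(m) = m mod 2 for m ≠ 6, g(6) = ⋄, with the hole ⋄ encoded as 2. -/
def gW (n : ℕ) : ℕ := if W n = 6 then 2 else W n % 2

def aLv (n : ℕ) : List ℕ := (fun l => l.flatMap fImg)^[n] [0]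

def aA (a : ℕ) : ℕ := (fImg a).getD 0 0
def aB (a : ℕ) : ℕ := (fImg a).getD 1 0

lemma fImg_eq (a : ℕ) : fImg a = [aA a, aB a] := by
  rcases a with _|_|_|_|_|_|_|_|a <;> rfl

lemma aLv_succ (n : ℕ) : aLv (n+1) = (aLv n).flatMap fImg :=
  Function.iterate_succ_apply' _ _ _

lemma step_len (l : List ℕ) : (l.flatMap fImg).length = 2 * l.length := by
  induction l with
  | nil => simp
  | cons a t ih => simp [fImg_eq a, ih]; ring

lemma aLv_len (n : ℕ) : (aLv n).length = 2^n := by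
  induction n with
  | zero => rfl
  | succ n ih => rw [aLv_succ, step_len, ih]; ring

lemma aLv_prefix (n : ℕ) : aLv n <+: aLv (n+1) := by
  induction n with
  | zero => exact ⟨[1], rfl⟩
  | succ n ih =>
    obtain ⟨t, ht⟩ := ih
    rw [aLv_succ, aLv_succ, ← ht, List.flatMap_append]
    exact ⟨_, rfl⟩

lemma aLv_prefix_le {m m' : ℕ} (h : m ≤ m') : aLv m <+: aLv m' := by
  induction m' with
  | zero => simp [Nat.le_zero.mp h]
  | succ m' ih =>
    rcases Nat.lt_or_ge m (m'+1) with h'|h'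
    · exact (ih (Nat.lt_succ_iff.mp h')).trans (aLv_prefix m')
    · have : m = m' + 1 := le_antisymm h h'
      simp [this]

lemma getD_prefix {l l' : List ℕ} (h : l <+: l') {n : ℕ} (hn : n < l.length) :
    l'.getD n 0 = l.getD n 0 := by
  obtain ⟨t, rfl⟩ := h
  simp [List.getD_eq_getElem?_getD, List.getElem?_append_left hn]

lemma W_eq (m n : ℕ) (hn : n < 2^m) : W n = (aLv m).getD n 0 := by
  have h1 : n < (aLv (n+1)).length := by
    rw [aLv_len]
    calc n < 2^n := Nat.lt_two_pow_self (n := n)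
    _ ≤ 2^(n+1) := Nat.pow_le_pow_right (by norm_num) (Nat.le_succ n)
  have h2 : n < (aLv m).length := by rw [aLv_len]; exact hn
  have hW : W n = (aLv (n+1)).getD n 0 := rfl
  rw [hW]
  rcases Nat.le_total m (n+1) with h|h
  · exact getD_prefix (aLv_prefix_le h) h2
  · exact (getD_prefix (aLv_prefix_le h) h1).symm

lemma step_getD (l : List ℕ) : ∀ k, k < l.length →
    (l.flatMap fImg).getD (2*k) 0 = aA (l.getD k 0) ∧
    (l.flatMap fImg).getD (2*k+1) 0 = aB (l.getD k 0) := by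
  induction l with
  | nil => intro k hk; simp at hk
  | cons a t ih =>
    intro k hk
    have hs : (a :: t).flatMap fImg = aA a :: aB a :: t.flatMap fImg := by
      rw [List.flatMap_cons, fImg_eq a]; rfl
    rcases k with _|k
    · simp [hs]
    · have hk' : k < t.length := by simpa using hk
      have h2 : 2*(k+1) = (2*k+1)+1 := by ring
      rw [hs, h2]
      simpa using ih k hk'

lemma WA (m : ℕ) : W (2*m) = aA (W m) := by
  have hm : m < (aLv (m+1)).length := by
    rw [aLv_len]
    calc m < 2^m := Nat.lt_two_pow_self (n := m)
    _ ≤ 2^(m+1) := Nat.pow_le_pow_right (by norm_num) (Nat.le_succ m)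
  have h1 : 2*m < 2^(m+2) := by
    have := Nat.lt_two_pow_self (n := m)
    have : 2*m < 2*2^m := by omega
    calc 2*m < 2*2^m := this
    _ ≤ 2^(m+2) := by rw [pow_succ, pow_succ]; nlinarith [Nat.pow_pos (n := m) (show 0 < 2 by norm_num)]
  rw [W_eq (m+2) (2*m) h1, aLv_succ]
  rw [(step_getD (aLv (m+1)) m hm).1]
  rfl

lemma WB (m : ℕ) : W (2*m+1) = aB (W m) := by
  have hm : m < (aLv (m+1)).length := by
    rw [aLv_len]
    calc m < 2^m := Nat.lt_two_pow_self (n := m)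
    _ ≤ 2^(m+1) := Nat.pow_le_pow_right (by norm_num) (Nat.le_succ m)
  have h1 : 2*m+1 < 2^(m+2) := by
    have h := Nat.lt_two_pow_self (n := m)
    have h2 : 2^(m+2) = 4*2^m := by rw [pow_succ, pow_succ]; ring
    omega
  rw [W_eq (m+2) (2*m+1) h1, aLv_succ]
  rw [(step_getD (aLv (m+1)) m hm).2]
  rfl

def aP2 : List (List ℕ) := [[0, 1], [0, 6], [1, 2], [1, 7], [2, 3], [2, 4], [3, 2], [4, 0], [4, 5], [5, 1], [6, 0], [7, 4]]

def aP3 : List (List ℕ) := [[0, 1, 2], [0, 1, 7], [0, 6, 0], [1, 2, 3], [1, 2, 4], [1, 7, 4], [2, 3, 2], [2, 4, 0], [2, 4, 5], [3, 2, 4], [4, 0, 1], [4, 0, 6], [4, 5, 1], [5, 1, 2], [6, 0, 1], [7, 4, 0]]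

def aP5 : List (List ℕ) := [[0, 1, 2, 3, 2], [0, 1, 7, 4, 0], [0, 6, 0, 1, 2], [0, 6, 0, 1, 7], [1, 2, 3, 2, 4], [1, 2, 4, 0, 6], [1, 7, 4, 0, 1], [2, 3, 2, 4, 0], [2, 3, 2, 4, 5], [2, 4, 0, 6, 0], [2, 4, 5, 1, 2], [3, 2, 4, 0, 6], [3, 2, 4, 5, 1], [4, 0, 1, 2, 3], [4, 0, 6, 0, 1], [4, 5, 1, 2, 4], [5, 1, 2, 4, 0], [6, 0, 1, 2, 3], [6, 0, 1, 7, 4], [7, 4, 0, 1, 2]]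

def aP9 : List (List ℕ) := [[0, 1, 2, 3, 2, 4, 0, 6, 0], [0, 1, 2, 3, 2, 4, 5, 1, 2], [0, 1, 7, 4, 0, 1, 2, 3, 2], [0, 6, 0, 1, 2, 3, 2, 4, 0], [0, 6, 0, 1, 2, 3, 2, 4, 5], [0, 6, 0, 1, 7, 4, 0, 1, 2], [1, 2, 3, 2, 4, 0, 6, 0, 1], [1, 2, 3, 2, 4, 5, 1, 2, 4], [1, 2, 4, 0, 6, 0, 1, 2, 3], [1, 2, 4, 0, 6, 0, 1, 7, 4], [1, 7, 4, 0, 1, 2, 3, 2, 4], [2, 3, 2, 4, 0, 6, 0, 1, 2], [2, 3, 2, 4, 0, 6, 0, 1, 7], [2, 3, 2, 4, 5, 1, 2, 4, 0], [2, 4, 0, 6, 0, 1, 2, 3, 2], [2, 4, 0, 6, 0, 1, 7, 4, 0], [2, 4, 5, 1, 2, 4, 0, 6, 0], [3, 2, 4, 0, 6, 0, 1, 2, 3], [3, 2, 4, 0, 6, 0, 1, 7, 4], [3, 2, 4, 5, 1, 2, 4, 0, 6], [4, 0, 1, 2, 3, 2, 4, 0, 6], [4, 0, 1, 2, 3, 2,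 4, 5, 1], [4, 0, 6, 0, 1, 2, 3, 2, 4], [4, 0, 6, 0, 1, 7, 4, 0, 1], [4, 5, 1, 2, 4, 0, 6, 0, 1], [5, 1, 2, 4, 0, 6, 0, 1, 2], [5, 1, 2, 4, 0, 6, 0, 1, 7], [6, 0, 1, 2, 3, 2, 4, 0, 6], [6, 0, 1, 2, 3, 2, 4, 5, 1], [6, 0, 1, 7, 4, 0, 1, 2, 3], [7, 4, 0, 1, 2, 3, 2, 4, 0], [7, 4, 0, 1, 2, 3, 2, 4, 5]]

def aP16 : List (List ℕ) := [[0, 1, 2, 3, 2, 4, 0, 6, 0, 1, 2, 3, 2, 4, 5, 1], [0, 1, 2, 3, 2, 4, 0, 6, 0, 1, 7, 4, 0, 1, 2, 3], [0, 1, 2, 3, 2, 4, 5, 1, 2, 4, 0, 6, 0, 1, 2, 3], [0, 1, 2, 3, 2, 4, 5, 1, 2, 4, 0, 6, 0, 1, 7, 4], [0, 1, 7, 4, 0, 1, 2, 3, 2, 4, 0, 6, 0, 1, 2, 3], [0, 1, 7, 4, 0, 1, 2, 3, 2, 4, 5, 1, 2, 4, 0, 6], [0, 6, 0, 1, 2,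 3, 2, 4, 0, 6, 0, 1, 7, 4, 0, 1], [0, 6, 0, 1, 2, 3, 2, 4, 5, 1, 2, 4, 0, 6, 0, 1], [0, 6, 0, 1, 7, 4, 0, 1, 2, 3, 2, 4, 0, 6, 0, 1], [0, 6, 0, 1, 7, 4, 0, 1, 2, 3, 2, 4, 5, 1, 2, 4], [1, 2, 3, 2, 4, 0, 6, 0, 1, 2, 3, 2, 4, 5, 1, 2], [1, 2, 3, 2, 4, 0, 6, 0, 1, 7, 4, 0, 1, 2, 3, 2], [1, 2, 3, 2, 4, 5, 1, 2, 4, 0, 6, 0, 1, 2, 3, 2], [1, 2, 3, 2, 4, 5, 1, 2, 4, 0, 6, 0, 1, 7, 4, 0], [1, 2, 4, 0, 6, 0, 1, 2, 3, 2, 4, 0, 6, 0, 1, 7], [1, 2, 4, 0, 6, 0, 1, 7, 4, 0, 1, 2, 3, 2, 4, 0], [1, 2, 4, 0, 6, 0, 1, 7, 4, 0, 1, 2, 3, 2, 4, 5], [1, 7, 4, 0, 1, 2, 3, 2, 4, 0, 6, 0, 1, 2, 3, 2], [1, 7, 4, 0, 1, 2, 3, 2, 4, 5, 1, 2, 4,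 0, 6, 0], [2, 3, 2, 4, 0, 6, 0, 1, 2, 3, 2, 4, 5, 1, 2, 4], [2, 3, 2, 4, 0, 6, 0, 1, 7, 4, 0, 1, 2, 3, 2, 4], [2, 3, 2, 4, 5, 1, 2, 4, 0, 6, 0, 1, 2, 3, 2, 4], [2, 3, 2, 4, 5, 1, 2, 4, 0, 6, 0, 1, 7, 4, 0, 1], [2, 4, 0, 6, 0, 1, 2, 3, 2, 4, 0, 6, 0, 1, 7, 4], [2, 4, 0, 6, 0, 1, 2, 3, 2, 4, 5, 1, 2, 4, 0, 6], [2, 4, 0, 6, 0, 1, 7, 4, 0, 1, 2, 3, 2, 4, 0, 6], [2, 4, 0, 6, 0, 1, 7, 4, 0, 1, 2, 3, 2, 4, 5, 1], [2, 4, 5, 1, 2, 4, 0, 6, 0, 1, 2, 3, 2, 4, 0, 6], [2, 4, 5, 1, 2, 4, 0, 6, 0, 1, 7, 4, 0, 1, 2, 3], [3, 2, 4, 0, 6, 0, 1, 2, 3, 2, 4, 5, 1, 2, 4, 0], [3, 2, 4, 0, 6, 0, 1, 7, 4, 0, 1, 2, 3, 2, 4, 0], [3, 2, 4, 0, 6,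 0, 1, 7, 4, 0, 1, 2, 3, 2, 4, 5], [3, 2, 4, 5, 1, 2, 4, 0, 6, 0, 1, 2, 3, 2, 4, 0], [3, 2, 4, 5, 1, 2, 4, 0, 6, 0, 1, 7, 4, 0, 1, 2], [4, 0, 1, 2, 3, 2, 4, 0, 6, 0, 1, 2, 3, 2, 4, 5], [4, 0, 1, 2, 3, 2, 4, 5, 1, 2, 4, 0, 6, 0, 1, 2], [4, 0, 1, 2, 3, 2, 4, 5, 1, 2, 4, 0, 6, 0, 1, 7], [4, 0, 6, 0, 1, 2, 3, 2, 4, 0, 6, 0, 1, 7, 4, 0], [4, 0, 6, 0, 1, 2, 3, 2, 4, 5, 1, 2, 4, 0, 6, 0], [4, 0, 6, 0, 1, 7, 4, 0, 1, 2, 3, 2, 4, 0, 6, 0], [4, 0, 6, 0, 1, 7, 4, 0, 1, 2, 3, 2, 4, 5, 1, 2], [4, 5, 1, 2, 4, 0, 6, 0, 1, 2, 3, 2, 4, 0, 6, 0], [4, 5, 1, 2, 4, 0, 6, 0, 1, 7, 4, 0, 1, 2, 3, 2], [5, 1, 2, 4, 0, 6, 0, 1, 2, 3, 2, 4, 0,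 6, 0, 1], [5, 1, 2, 4, 0, 6, 0, 1, 7, 4, 0, 1, 2, 3, 2, 4], [6, 0, 1, 2, 3, 2, 4, 0, 6, 0, 1, 7, 4, 0, 1, 2], [6, 0, 1, 2, 3, 2, 4, 5, 1, 2, 4, 0, 6, 0, 1, 2], [6, 0, 1, 2, 3, 2, 4, 5, 1, 2, 4, 0, 6, 0, 1, 7], [6, 0, 1, 7, 4, 0, 1, 2, 3, 2, 4, 0, 6, 0, 1, 2], [6, 0, 1, 7, 4, 0, 1, 2, 3, 2, 4, 5, 1, 2, 4, 0], [7, 4, 0, 1, 2, 3, 2, 4, 0, 6, 0, 1, 2, 3, 2, 4], [7, 4, 0, 1, 2, 3, 2, 4, 5, 1, 2, 4, 0, 6, 0, 1]]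

def o2 : List ℕ → List ℕ
  | [a, b] => [aB a, aA b]
  | _ => []

def e3 : List ℕ → List ℕ
  | [a, b] => [aA a, aB a, aA b]
  | _ => []

def o3 : List ℕ → List ℕ
  | [a, b] => [aB a, aA b, aB b]
  | _ => []

def e5 : List ℕ → List ℕ
  | [a, b, c] => [aA a, aB a, aA b, aB b, aA c]
  | _ => []

def o5 : List ℕ → List ℕ
  | [a, b, c] => [aB a, aA b, aB b, aA c, aB c]
  | _ => []

def e9 : List ℕ → List ℕ
  | [a, b, c, d, e] => [aA a, aB a, aA b, aB b, aA c, aB c, aA d, aB d, aA e]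
  | _ => []

def o9 : List ℕ → List ℕ
  | [a, b, c, d, e] => [aB a, aA b, aB b, aA c, aB c, aA d, aB d, aA e, aB e]
  | _ => []

def e16 : List ℕ → List ℕ
  | [a, b, c, d, e, f, g, h, _] =>
    [aA a, aB a, aA b, aB b, aA c, aB c, aA d, aB d, aA e, aB e, aA f, aB f, aA g, aB g, aA h, aB h]
  | _ => []

def o16 : List ℕ → List ℕ
  | [a, b, c, d, e, f, g, h, i] =>
    [aB a, aA b, aB b, aA c, aB c, aA d, aB d, aA e, aB e, aA f, aB f, aA g, aB g, aA h, aB h, aA i]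
  | _ => []

lemma memAB : ∀ a : ℕ, [aA a, aB a] ∈ aP2 := by
  intro a
  rcases a with _|_|_|_|_|_|_|_|a <;>
    first
      | decide
      | exact (by decide : ([2, 4] : List ℕ) ∈ aP2)

lemma c2o : ∀ x ∈ aP2, o2 x ∈ aP2 := by decide
lemma c3e : ∀ x ∈ aP2, e3 x ∈ aP3 := by decide
lemma c3o : ∀ x ∈ aP2, o3 x ∈ aP3 := by decide
lemma c5e : ∀ x ∈ aP3, e5 x ∈ aP5 := by decide
lemma c5o : ∀ x ∈ aP3, o5 x ∈ aP5 := by decide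
lemma c9e : ∀ x ∈ aP5, e9 x ∈ aP9 := by decide
lemma c9o : ∀ x ∈ aP5, o9 x ∈ aP9 := by decide
lemma c16e : ∀ x ∈ aP9, e16 x ∈ aP16 := by decide
lemma c16o : ∀ x ∈ aP9, o16 x ∈ aP16 := by decide

lemma w2 : ∀ k, [W k, W (k+1)] ∈ aP2 := by
  intro k
  induction k using Nat.strong_induction_on with
  | _ k ih =>
    obtain ⟨m, hm | hm⟩ := Nat.even_or_odd' k
    · subst hm
      have r0 := WA m
      have r1 := WB m
      rw [r0, r1]
      exact memAB (W m)
    · subst hm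
      have r0 := WB m
      have r1 : W (2*m+1+1) = aA (W (m+1)) := by
        rw [show 2*m+1+1 = 2*(m+1) by omega]; exact WA (m+1)
      rw [r0, r1]
      exact c2o _ (ih m (by omega))

lemma w3 : ∀ k, [W k, W (k+1), W (k+2)] ∈ aP3 := by
  intro k
  obtain ⟨m, hm | hm⟩ := Nat.even_or_odd' k
  · subst hm
    have r0 := WA m
    have r1 := WB m
    have r2 : W (2*m+2) = aA (W (m+1)) := by
      rw [show 2*m+2 = 2*(m+1) by omega]; exact WA (m+1)
    rw [r0, r1, r2]
    exact c3e _ (w2 m)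
  · subst hm
    have r0 := WB m
    have r1 : W (2*m+1+1) = aA (W (m+1)) := by
      rw [show 2*m+1+1 = 2*(m+1) by omega]; exact WA (m+1)
    have r2 : W (2*m+1+2) = aB (W (m+1)) := by
      rw [show 2*m+1+2 = 2*(m+1)+1 by omega]; exact WB (m+1)
    rw [r0, r1, r2]
    exact c3o _ (w2 m)

lemma w5 : ∀ k, [W k, W (k+1), W (k+2), W (k+3), W (k+4)] ∈ aP5 := by
  intro k
  obtain ⟨m, hm | hm⟩ := Nat.even_or_odd' k
  · subst hm
    have r0 := WA m
    have r1 := WB m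
    have r2 : W (2*m+2) = aA (W (m+1)) := by
      rw [show 2*m+2 = 2*(m+1) by omega]; exact WA (m+1)
    have r3 : W (2*m+3) = aB (W (m+1)) := by
      rw [show 2*m+3 = 2*(m+1)+1 by omega]; exact WB (m+1)
    have r4 : W (2*m+4) = aA (W (m+2)) := by
      rw [show 2*m+4 = 2*(m+2) by omega]; exact WA (m+2)
    rw [r0, r1, r2, r3, r4]
    exact c5e _ (w3 m)
  · subst hm
    have r0 := WB m
    have r1 : W (2*m+1+1) = aA (W (m+1)) := by
      rw [show 2*m+1+1 = 2*(m+1) by omega]; exact WA (m+1)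
    have r2 : W (2*m+1+2) = aB (W (m+1)) := by
      rw [show 2*m+1+2 = 2*(m+1)+1 by omega]; exact WB (m+1)
    have r3 : W (2*m+1+3) = aA (W (m+2)) := by
      rw [show 2*m+1+3 = 2*(m+2) by omega]; exact WA (m+2)
    have r4 : W (2*m+1+4) = aB (W (m+2)) := by
      rw [show 2*m+1+4 = 2*(m+2)+1 by omega]; exact WB (m+2)
    rw [r0, r1, r2, r3, r4]
    exact c5o _ (w3 m)

lemma w9 : ∀ k, [W k, W (k+1), W (k+2), W (k+3), W (k+4), W (k+5), W (k+6), W (k+7), W (k+8)] ∈ aP9 := by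
  intro k
  obtain ⟨m, hm | hm⟩ := Nat.even_or_odd' k
  · subst hm
    have r0 := WA m
    have r1 := WB m
    have r2 : W (2*m+2) = aA (W (m+1)) := by
      rw [show 2*m+2 = 2*(m+1) by omega]; exact WA (m+1)
    have r3 : W (2*m+3) = aB (W (m+1)) := by
      rw [show 2*m+3 = 2*(m+1)+1 by omega]; exact WB (m+1)
    have r4 : W (2*m+4) = aA (W (m+2)) := by
      rw [show 2*m+4 = 2*(m+2) by omega]; exact WA (m+2)
    have r5 : W (2*m+5) = aB (W (m+2)) := by
      rw [show 2*m+5 = 2*(m+2)+1 by omega]; exact WB (m+2)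
    have r6 : W (2*m+6) = aA (W (m+3)) := by
      rw [show 2*m+6 = 2*(m+3) by omega]; exact WA (m+3)
    have r7 : W (2*m+7) = aB (W (m+3)) := by
      rw [show 2*m+7 = 2*(m+3)+1 by omega]; exact WB (m+3)
    have r8 : W (2*m+8) = aA (W (m+4)) := by
      rw [show 2*m+8 = 2*(m+4) by omega]; exact WA (m+4)
    rw [r0, r1, r2, r3, r4, r5, r6, r7, r8]
    exact c9e _ (w5 m)
  · subst hm
    have r0 := WB m
    have r1 : W (2*m+1+1) = aA (W (m+1)) := by
      rw [show 2*m+1+1 = 2*(m+1) by omega]; exact WA (m+1)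
    have r2 : W (2*m+1+2) = aB (W (m+1)) := by
      rw [show 2*m+1+2 = 2*(m+1)+1 by omega]; exact WB (m+1)
    have r3 : W (2*m+1+3) = aA (W (m+2)) := by
      rw [show 2*m+1+3 = 2*(m+2) by omega]; exact WA (m+2)
    have r4 : W (2*m+1+4) = aB (W (m+2)) := by
      rw [show 2*m+1+4 = 2*(m+2)+1 by omega]; exact WB (m+2)
    have r5 : W (2*m+1+5) = aA (W (m+3)) := by
      rw [show 2*m+1+5 = 2*(m+3) by omega]; exact WA (m+3)
    have r6 : W (2*m+1+6) = aB (W (m+3)) := by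
      rw [show 2*m+1+6 = 2*(m+3)+1 by omega]; exact WB (m+3)
    have r7 : W (2*m+1+7) = aA (W (m+4)) := by
      rw [show 2*m+1+7 = 2*(m+4) by omega]; exact WA (m+4)
    have r8 : W (2*m+1+8) = aB (W (m+4)) := by
      rw [show 2*m+1+8 = 2*(m+4)+1 by omega]; exact WB (m+4)
    rw [r0, r1, r2, r3, r4, r5, r6, r7, r8]
    exact c9o _ (w5 m)

lemma w16 : ∀ k, [W k, W (k+1), W (k+2), W (k+3), W (k+4), W (k+5), W (k+6), W (k+7), W (k+8), W (k+9), W (k+10), W (k+11), W (k+12), W (k+13), W (k+14), W (k+15)] ∈ aP16 := by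
  intro k
  obtain ⟨m, hm | hm⟩ := Nat.even_or_odd' k
  · subst hm
    have r0 := WA m
    have r1 := WB m
    have r2 : W (2*m+2) = aA (W (m+1)) := by
      rw [show 2*m+2 = 2*(m+1) by omega]; exact WA (m+1)
    have r3 : W (2*m+3) = aB (W (m+1)) := by
      rw [show 2*m+3 = 2*(m+1)+1 by omega]; exact WB (m+1)
    have r4 : W (2*m+4) = aA (W (m+2)) := by
      rw [show 2*m+4 = 2*(m+2) by omega]; exact WA (m+2)
    have r5 : W (2*m+5) = aB (W (m+2)) := by
      rw [show 2*m+5 = 2*(m+2)+1 by omega]; exact WB (m+2)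
    have r6 : W (2*m+6) = aA (W (m+3)) := by
      rw [show 2*m+6 = 2*(m+3) by omega]; exact WA (m+3)
    have r7 : W (2*m+7) = aB (W (m+3)) := by
      rw [show 2*m+7 = 2*(m+3)+1 by omega]; exact WB (m+3)
    have r8 : W (2*m+8) = aA (W (m+4)) := by
      rw [show 2*m+8 = 2*(m+4) by omega]; exact WA (m+4)
    have r9 : W (2*m+9) = aB (W (m+4)) := by
      rw [show 2*m+9 = 2*(m+4)+1 by omega]; exact WB (m+4)
    have r10 : W (2*m+10) = aA (W (m+5)) := by
      rw [show 2*m+10 = 2*(m+5) by omega]; exact WA (m+5)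
    have r11 : W (2*m+11) = aB (W (m+5)) := by
      rw [show 2*m+11 = 2*(m+5)+1 by omega]; exact WB (m+5)
    have r12 : W (2*m+12) = aA (W (m+6)) := by
      rw [show 2*m+12 = 2*(m+6) by omega]; exact WA (m+6)
    have r13 : W (2*m+13) = aB (W (m+6)) := by
      rw [show 2*m+13 = 2*(m+6)+1 by omega]; exact WB (m+6)
    have r14 : W (2*m+14) = aA (W (m+7)) := by
      rw [show 2*m+14 = 2*(m+7) by omega]; exact WA (m+7)
    have r15 : W (2*m+15) = aB (W (m+7)) := by
      rw [show 2*m+15 = 2*(m+7)+1 by omega]; exact WB (m+7)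
    rw [r0, r1, r2, r3, r4, r5, r6, r7, r8, r9, r10, r11, r12, r13, r14, r15]
    exact c16e _ (w9 m)
  · subst hm
    have r0 := WB m
    have r1 : W (2*m+1+1) = aA (W (m+1)) := by
      rw [show 2*m+1+1 = 2*(m+1) by omega]; exact WA (m+1)
    have r2 : W (2*m+1+2) = aB (W (m+1)) := by
      rw [show 2*m+1+2 = 2*(m+1)+1 by omega]; exact WB (m+1)
    have r3 : W (2*m+1+3) = aA (W (m+2)) := by
      rw [show 2*m+1+3 = 2*(m+2) by omega]; exact WA (m+2)
    have r4 : W (2*m+1+4) = aB (W (m+2)) := by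
      rw [show 2*m+1+4 = 2*(m+2)+1 by omega]; exact WB (m+2)
    have r5 : W (2*m+1+5) = aA (W (m+3)) := by
      rw [show 2*m+1+5 = 2*(m+3) by omega]; exact WA (m+3)
    have r6 : W (2*m+1+6) = aB (W (m+3)) := by
      rw [show 2*m+1+6 = 2*(m+3)+1 by omega]; exact WB (m+3)
    have r7 : W (2*m+1+7) = aA (W (m+4)) := by
      rw [show 2*m+1+7 = 2*(m+4) by omega]; exact WA (m+4)
    have r8 : W (2*m+1+8) = aB (W (m+4)) := by
      rw [show 2*m+1+8 = 2*(m+4)+1 by omega]; exact WB (m+4)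
    have r9 : W (2*m+1+9) = aA (W (m+5)) := by
      rw [show 2*m+1+9 = 2*(m+5) by omega]; exact WA (m+5)
    have r10 : W (2*m+1+10) = aB (W (m+5)) := by
      rw [show 2*m+1+10 = 2*(m+5)+1 by omega]; exact WB (m+5)
    have r11 : W (2*m+1+11) = aA (W (m+6)) := by
      rw [show 2*m+1+11 = 2*(m+6) by omega]; exact WA (m+6)
    have r12 : W (2*m+1+12) = aB (W (m+6)) := by
      rw [show 2*m+1+12 = 2*(m+6)+1 by omega]; exact WB (m+6)
    have r13 : W (2*m+1+13) = aA (W (m+7)) := by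
      rw [show 2*m+1+13 = 2*(m+7) by omega]; exact WA (m+7)
    have r14 : W (2*m+1+14) = aB (W (m+7)) := by
      rw [show 2*m+1+14 = 2*(m+7)+1 by omega]; exact WB (m+7)
    have r15 : W (2*m+1+15) = aA (W (m+8)) := by
      rw [show 2*m+1+15 = 2*(m+8) by omega]; exact WA (m+8)
    rw [r0, r1, r2, r3, r4, r5, r6, r7, r8, r9, r10, r11, r12, r13, r14, r15]
    exact c16o _ (w9 m)

def agv (x : List ℕ) (i : ℕ) : ℕ := if x.getD i 0 = 6 then 2 else x.getD i 0 % 2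

lemma agv_eq (j i : ℕ) (hi : i < 16) :
    agv [W j, W (j+1), W (j+2), W (j+3), W (j+4), W (j+5), W (j+6), W (j+7), W (j+8), W (j+9), W (j+10), W (j+11), W (j+12), W (j+13), W (j+14), W (j+15)] i = gW (j+i) := by
  have hg : ([W j, W (j+1), W (j+2), W (j+3), W (j+4), W (j+5), W (j+6), W (j+7), W (j+8), W (j+9), W (j+10), W (j+11), W (j+12), W (j+13), W (j+14), W (j+15)] : List ℕ).getD i 0 = W (j+i) := by
    interval_cases i <;> simp [List.getD]
  unfold agv gW
  rw [hg]

lemma hno : ∀ x ∈ aP16, ∀ nn < 8, 3 ≤ nn →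
    ¬ ∀ i < nn, (agv x i ≠ agv x (nn+i) ∧ agv x i ≠ 2 ∧ agv x (nn+i) ≠ 2) := by decide

lemma hhole : ∀ x ∈ aP16, ¬ ∀ i < 16, agv x i ≠ 2 := by decide

/-- g(W) avoids antisquares of order ≥ 3. -/
theorem stmt10 :
    ¬ ∃ j n : ℕ, 3 ≤ n ∧ ∀ i, i < n →
      (gW (j+i) ≠ gW (j+n+i) ∧ gW (j+i) ≠ 2 ∧ gW (j+n+i) ≠ 2) := by
  rintro ⟨j, n, hn3, h⟩
  rcases le_or_gt n 7 with h7 | h8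
  · refine hno _ (w16 j) n (by omega) hn3 ?_
    intro i hi
    rw [agv_eq j i (by omega), agv_eq j (n+i) (by omega),
      show j + (n+i) = j+n+i by omega]
    exact h i hi
  · have hh := hhole _ (w16 j)
    push_neg at hh
    obtain ⟨i, hi16, h6⟩ := hh
    rw [agv_eq j i hi16] at h6
    rcases Nat.lt_or_ge i n with hlt | hge
    · exact (h i hlt).2.1 h6
    · have hi2 : i - n < n := by omega
      refine (h (i-n) hi2).2.2 ?_
      rw [show j+n+(i-n) = j+i by omega]
      exact h6
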